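/- Define, for real x ≥ 1: τ1(x) = (−x² + 16x + 17)/(4·√((2+2x)(x²+8x+7))), τ2(x) = (−x² + 12x + 13)/(4·(x+2)·√(2+2x)), τ3(x) = (−x² + 10x + 11)/√((8x+17)(x²+8x+7)), τ4(x) = (−x² + 9x + 7)/((x+2)·√(8x+17)). Each τ_i is monotonically decreasing on [1, ∞), τ_i(1) = 1 for each i, and consequently τ_i(x) < 1 for every x > 1 and i ∈ {1,2,3,4}. -/

import Mathlib

noncomputable def tau1 (x : ℝ) : ℝ :=
  (-x ^ 2 + 16 * x + 17) / (4 * Real.sqrt ((2 + 2 * x) * (x ^ 2 + 8 * x + 7)))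

noncomputable def tau2 (x : ℝ) : ℝ :=
  (-x ^ 2 + 12 * x + 13) / (4 * (x + 2) * Real.sqrt (2 + 2 * x))

noncomputable def tau3 (x : ℝ) : ℝ :=
  (-x ^ 2 + 10 * x + 11) / Real.sqrt ((8 * x + 17) * (x ^ 2 + 8 * x + 7))

noncomputable def tau4 (x : ℝ) : ℝ :=
  (-x ^ 2 + 9 * x + 7) / ((x + 2) * Real.sqrt (8 * x + 17))

/-!
Each `τᵢ` has the form `N / √P` with polynomials `N`, `P` and `P > 0` on `[1, ∞)`. The derivative
of `N / √P` has the sign of `2 N' P - N P'`, and after the substitution `x = 1 + y` this quartic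
has only negative coefficients, so `τᵢ` is strictly decreasing on `[1, ∞)`. At `x = 1` one has
`P(1) = N(1)²` with `N(1) > 0`, whence `τᵢ(1) = 1`.
-/

open Polynomial Set

theorem Real.sqrt_sq_mul {a : ℝ} (ha : 0 ≤ a) (b : ℝ) : √(a ^ 2 * b) = a * √b := by
  rw [Real.sqrt_mul (sq_nonneg a), Real.sqrt_sq ha]

theorem strictAntiOn_div_sqrt {N P N' P' : ℝ → ℝ} {s : Set ℝ} (hs : Convex ℝ s)
    (hN : ∀ x ∈ s, HasDerivAt N (N' x) x) (hP : ∀ x ∈ s, HasDerivAt P (P' x) x)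
    (hP_pos : ∀ x ∈ s, 0 < P x) (hneg : ∀ x ∈ interior s, 2 * N' x * P x - N x * P' x < 0) :
    StrictAntiOn (fun x => N x / √(P x)) s := by
  have hderiv : ∀ x ∈ s, HasDerivAt (fun x => N x / √(P x))
      ((2 * N' x * P x - N x * P' x) / (2 * P x * √(P x))) x := by
    intro x hx
    have hPx := hP_pos x hx
    have hsqrt : √(P x) ^ 2 = P x := Real.sq_sqrt hPx.le
    refine ((hN x hx).div ((hP x hx).sqrt hPx.ne') (Real.sqrt_pos.2 hPx).ne').congr_deriv ?_
    field_simp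
    linear_combination N x * P' x * hsqrt
  refine strictAntiOn_of_deriv_neg hs
    (fun x hx => (hderiv x hx).continuousAt.continuousWithinAt) fun x hx => ?_
  have hxs := interior_subset hx
  have := hP_pos x hxs
  rw [(hderiv x hxs).deriv]
  exact div_neg_of_neg_of_pos (hneg x hx) (by positivity)

theorem Polynomial.strictAntiOn_Ici_eval_div_sqrt_eval {N P : ℝ[X]} {a : ℝ}
    (hP_pos : ∀ x, a ≤ x → 0 < P.eval x)
    (hneg : ∀ y, 0 < y → (2 * derivative N * P - N * derivative P).eval (a + y) < 0) :
    StrictAntiOn (fun x => N.eval x / √(P.eval x)) (Ici a) := by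
  refine strictAntiOn_div_sqrt (convex_Ici a) (fun x _ => N.hasDerivAt x)
    (fun x _ => P.hasDerivAt x) hP_pos fun x hx => ?_
  rw [interior_Ici, mem_Ioi] at hx
  simpa [mul_assoc] using hneg (x - a) (sub_pos.2 hx)

theorem tau1_strictAntiOn : StrictAntiOn tau1 (Ici 1) := by
  refine (strictAntiOn_Ici_eval_div_sqrt_eval (N := -X ^ 2 + 16 * X + 17)
    (P := 4 ^ 2 * ((2 + 2 * X) * (X ^ 2 + 8 * X + 7))) (fun x hx => ?_) fun y hy => ?_).congr
    fun x _ => ?_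
  · have : 0 < x := zero_lt_one.trans_le hx
    simp only [eval_mul, eval_add, eval_pow, eval_X, eval_ofNat]
    positivity
  · simp [derivative_pow]
    linarith [pow_pos hy 2, pow_pos hy 3, pow_pos hy 4]
  · simp only [eval_mul, eval_add, eval_neg, eval_pow, eval_X, eval_ofNat]
    rw [Real.sqrt_sq_mul (by norm_num), tau1]

theorem tau2_strictAntiOn : StrictAntiOn tau2 (Ici 1) := by
  refine (strictAntiOn_Ici_eval_div_sqrt_eval (N := -X ^ 2 + 12 * X + 13)
    (P := (4 * (X + 2)) ^ 2 * (2 + 2 * X)) (fun x hx => ?_) fun y hy => ?_).congr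
    fun x hx => ?_
  · have : 0 < x := zero_lt_one.trans_le hx
    simp only [eval_mul, eval_add, eval_pow, eval_X, eval_ofNat]
    positivity
  · simp [derivative_pow]
    linarith [pow_pos hy 2, pow_pos hy 3, pow_pos hy 4]
  · simp only [eval_mul, eval_add, eval_neg, eval_pow, eval_X, eval_ofNat]
    have : 0 < x := zero_lt_one.trans_le hx
    rw [Real.sqrt_sq_mul (by positivity), tau2]

theorem tau3_strictAntiOn : StrictAntiOn tau3 (Ici 1) := by
  refine (strictAntiOn_Ici_eval_div_sqrt_eval (N := -X ^ 2 + 10 * X + 11)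
    (P := (8 * X + 17) * (X ^ 2 + 8 * X + 7)) (fun x hx => ?_) fun y hy => ?_).congr
    fun x _ => ?_
  · have : 0 < x := zero_lt_one.trans_le hx
    simp only [eval_mul, eval_add, eval_pow, eval_X, eval_ofNat]
    positivity
  · simp [derivative_pow]
    linarith [pow_pos hy 2, pow_pos hy 3, pow_pos hy 4]
  · simp only [eval_mul, eval_add, eval_neg, eval_pow, eval_X, eval_ofNat, tau3]

theorem tau4_strictAntiOn : StrictAntiOn tau4 (Ici 1) := by
  refine (strictAntiOn_Ici_eval_div_sqrt_eval (N := -X ^ 2 + 9 * X + 7)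
    (P := (X + 2) ^ 2 * (8 * X + 17)) (fun x hx => ?_) fun y hy => ?_).congr
    fun x hx => ?_
  · have : 0 < x := zero_lt_one.trans_le hx
    simp only [eval_mul, eval_add, eval_pow, eval_X, eval_ofNat]
    positivity
  · simp [derivative_pow]
    linarith [pow_pos hy 2, pow_pos hy 3, pow_pos hy 4]
  · have : 0 < x := zero_lt_one.trans_le hx
    simp only [eval_mul, eval_add, eval_neg, eval_pow, eval_X, eval_ofNat]
    rw [Real.sqrt_sq_mul (by positivity), tau4]

theorem tau1_one : tau1 1 = 1 := by
  rw [tau1, show ((2 : ℝ) + 2 * 1) * (1 ^ 2 + 8 * 1 + 7) = 8 ^ 2 by norm_num,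
    Real.sqrt_sq (by norm_num)]
  norm_num

theorem tau2_one : tau2 1 = 1 := by
  rw [tau2, show (2 : ℝ) + 2 * 1 = 2 ^ 2 by norm_num, Real.sqrt_sq (by norm_num)]
  norm_num

theorem tau3_one : tau3 1 = 1 := by
  rw [tau3, show ((8 : ℝ) * 1 + 17) * (1 ^ 2 + 8 * 1 + 7) = 20 ^ 2 by norm_num,
    Real.sqrt_sq (by norm_num)]
  norm_num

theorem tau4_one : tau4 1 = 1 := by
  rw [tau4, show (8 : ℝ) * 1 + 17 = 5 ^ 2 by norm_num, Real.sqrt_sq (by norm_num)]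
  norm_num

/-- each τ_i is monotonically decreasing on [1,∞), equals 1 at x = 1,
and consequently τ_i(x) < 1 for every x > 1. -/
theorem stmt_15 :
    (StrictAntiOn tau1 (Set.Ici 1) ∧ StrictAntiOn tau2 (Set.Ici 1) ∧
     StrictAntiOn tau3 (Set.Ici 1) ∧ StrictAntiOn tau4 (Set.Ici 1)) ∧
    (tau1 1 = 1 ∧ tau2 1 = 1 ∧ tau3 1 = 1 ∧ tau4 1 = 1) ∧
    (∀ x : ℝ, 1 < x → tau1 x < 1 ∧ tau2 x < 1 ∧ tau3 x < 1 ∧ tau4 x < 1) := by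
  refine ⟨⟨tau1_strictAntiOn, tau2_strictAntiOn, tau3_strictAntiOn, tau4_strictAntiOn⟩,
    ⟨tau1_one, tau2_one, tau3_one, tau4_one⟩, fun x hx =>
    ⟨tau1_one ▸ tau1_strictAntiOn self_mem_Ici hx.le hx,
    tau2_one ▸ tau2_strictAntiOn self_mem_Ici hx.le hx,
    tau3_one ▸ tau3_strictAntiOn self_mem_Ici hx.le hx,
    tau4_one ▸ tau4_strictAntiOn self_mem_Ici hx.le hx⟩⟩
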